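/- Let A be an n×n, B an n×m, and C_z an r×n real matrix, let P be an n×n real symmetric positive semidefinite matrix and γ > 0 a real number, and suppose that for all x ∈ ℝⁿ and u ∈ ℝᵐ, xᵀ(AᵀP + PA + C_zᵀC_z)x + 2 xᵀ P B u − γ uᵀu ≤ 0. Let x : ℝ → ℝⁿ be differentiable and u : ℝ → ℝᵐ continuous with x'(t) = A x(t) + B u(t) for all t and x(0) = 0. Then for every T ≥ 0, ∫₀ᵀ ‖C_z x(t)‖² dt ≤ γ ∫₀ᵀ ‖u(t)‖² dt. In particular the L₂-gain from u to the performance output z = C_z x is at most √γ. -/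

import Mathlib

/-!
With the storage function `V(t) = x(t)ᵀ P x(t)`, the quadratic-form hypothesis evaluated at
`(x(t), u(t))` is exactly the dissipation inequality `V'(t) + ‖C_z x(t)‖² ≤ γ ‖u(t)‖²`.
Integrating over `[0, T]` gives `V(T) - V(0) + ∫₀ᵀ ‖C_z x‖² ≤ γ ∫₀ᵀ ‖u‖²`, and
`V(0) = 0`, `V(T) ≥ 0` since `x(0) = 0` and `P ⪰ 0`.
-/

open Matrix MeasureTheory intervalIntegral

section Derivatives

variable {𝕜 ι κ : Type*} [NontriviallyNormedField 𝕜] [Fintype ι]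
  {f g : 𝕜 → ι → 𝕜} {f' g' : ι → 𝕜} {t : 𝕜}

theorem HasDerivAt.dotProduct (hf : HasDerivAt f f' t) (hg : HasDerivAt g g' t) :
    HasDerivAt (fun s => f s ⬝ᵥ g s) (f' ⬝ᵥ g t + f t ⬝ᵥ g') t := by
  simp only [_root_.dotProduct, ← Finset.sum_add_distrib]
  exact HasDerivAt.fun_sum fun i _ =>
    (hasDerivAt_pi.1 hf i).mul (hasDerivAt_pi.1 hg i)

theorem HasDerivAt.matrix_mulVec (M : Matrix κ ι 𝕜) (hf : HasDerivAt f f' t) :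
    HasDerivAt (fun s => M *ᵥ f s) (M *ᵥ f') t :=
  hasDerivAt_pi.2 fun i => by
    simp only [mulVec]
    exact HasDerivAt.fun_sum fun j _ => (hasDerivAt_pi.1 hf j).const_mul (M i j)

end Derivatives

theorem EuclideanSpace.norm_symm_equiv_sq {ι : Type*} [Fintype ι] (v : ι → ℝ) :
    ‖(EuclideanSpace.equiv ι ℝ).symm v‖ ^ 2 = v ⬝ᵥ v := by
  rw [EuclideanSpace.real_norm_sq_eq]
  simp [dotProduct, sq]

theorem sub_add_integral_le_integral_of_hasDerivAt {V V' s w : ℝ → ℝ} {a b : ℝ} (hab : a ≤ b)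
    (hV : ∀ t ∈ Set.uIcc a b, HasDerivAt V (V' t) t) (hV' : IntervalIntegrable V' volume a b)
    (hs : IntervalIntegrable s volume a b) (hw : IntervalIntegrable w volume a b)
    (hle : ∀ t ∈ Set.Icc a b, s t + V' t ≤ w t) :
    V b - V a + ∫ t in a..b, s t ≤ ∫ t in a..b, w t := by
  rw [← integral_eq_sub_of_hasDerivAt hV hV', add_comm, ← integral_add hs hV']
  exact integral_mono_on hab (hs.add hV') hw hle

section Storage

variable {R ι κ ρ : Type*} [CommRing R] [Fintype ι] [Fintype κ] [Fintype ρ]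

theorem storage_deriv_add_output_sq_eq (A : Matrix ι ι R) (B : Matrix ι κ R) (C : Matrix ρ ι R)
    {P : Matrix ι ι R} (hP : P.IsSymm) (x : ι → R) (u : κ → R) :
    (A *ᵥ x + B *ᵥ u) ⬝ᵥ P *ᵥ x + x ⬝ᵥ P *ᵥ (A *ᵥ x + B *ᵥ u) + C *ᵥ x ⬝ᵥ C *ᵥ x
      = x ⬝ᵥ (Aᵀ * P + P * A + Cᵀ * C) *ᵥ x + 2 * (x ⬝ᵥ (P * B) *ᵥ u) := by
  have hPB : B *ᵥ u ⬝ᵥ P *ᵥ x = x ⬝ᵥ P *ᵥ B *ᵥ u := by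
    simpa only [hP.eq] using dotProduct_transpose_mulVec P (B *ᵥ u) x
  simp only [add_mulVec, mulVec_add, ← mulVec_mulVec, dotProduct_add, add_dotProduct, hPB,
    dotProduct_transpose_mulVec, dotProduct_comm (A *ᵥ x)]
  ring

end Storage

theorem statement7_general (n m r : ℕ)
    (A : Matrix (Fin n) (Fin n) ℝ) (B : Matrix (Fin n) (Fin m) ℝ)
    (Cz : Matrix (Fin r) (Fin n) ℝ)
    (P : Matrix (Fin n) (Fin n) ℝ) (hP : P.PosSemidef) (γ : ℝ)
    (hLMI : ∀ (x : Fin n → ℝ) (u : Fin m → ℝ),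
      x ⬝ᵥ ((Aᵀ * P + P * A + Czᵀ * Cz).mulVec x)
        + 2 * (x ⬝ᵥ ((P * B).mulVec u)) - γ * (u ⬝ᵥ u) ≤ 0)
    (x : ℝ → (Fin n → ℝ)) (u : ℝ → (Fin m → ℝ))
    (hx : ∀ t, HasDerivAt x (A.mulVec (x t) + B.mulVec (u t)) t)
    (hu : Continuous u) (hx0 : x 0 = 0) :
    ∀ T : ℝ, 0 ≤ T →
      ∫ t in (0:ℝ)..T, ‖(EuclideanSpace.equiv (Fin r) ℝ).symm (Cz.mulVec (x t))‖ ^ 2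
        ≤ γ * ∫ t in (0:ℝ)..T, ‖(EuclideanSpace.equiv (Fin m) ℝ).symm (u t)‖ ^ 2 := by
  intro T hT
  have hxc : Continuous x := continuous_iff_continuousAt.2 fun t => (hx t).continuousAt
  have hvc : Continuous fun t => A *ᵥ x t + B *ᵥ u t :=
    (continuous_const.matrix_mulVec hxc).add (continuous_const.matrix_mulVec hu)
  have hdiss := sub_add_integral_le_integral_of_hasDerivAt hT
    (s := fun t => Cz *ᵥ x t ⬝ᵥ Cz *ᵥ x t) (w := fun t => γ * (u t ⬝ᵥ u t))
    (fun t _ => (hx t).dotProduct ((hx t).matrix_mulVec P))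
    (((hvc.dotProduct (continuous_const.matrix_mulVec hxc)).add
      (hxc.dotProduct (continuous_const.matrix_mulVec hvc))).intervalIntegrable 0 T)
    (((continuous_const.matrix_mulVec hxc).dotProduct
      (continuous_const.matrix_mulVec hxc)).intervalIntegrable 0 T)
    ((continuous_const.mul (hu.dotProduct hu)).intervalIntegrable 0 T)
    fun t _ => by
      linarith [hLMI (x t) (u t), storage_deriv_add_output_sq_eq A B Cz
        (isHermitian_iff_isSymm.mp hP.isHermitian) (x t) (u t)]
  have hVT : 0 ≤ x T ⬝ᵥ P *ᵥ x T := by simpa using hP.dotProduct_mulVec_nonneg (x T)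
  simp only [EuclideanSpace.norm_symm_equiv_sq, hx0, mulVec_zero, dotProduct_zero,
    intervalIntegral.integral_const_mul] at hdiss ⊢
  linarith

/-- the Bounded Real Lemma quadratic-form inequality (with `P ⪰ 0`)
implies the finite-horizon `L₂`-gain bound
`∫₀ᵀ ‖C_z x(t)‖² dt ≤ γ ∫₀ᵀ ‖u(t)‖² dt` along trajectories of `x' = A x + B u`
starting at `x(0) = 0`. -/
theorem statement7 (n m r : ℕ)
    (A : Matrix (Fin n) (Fin n) ℝ) (B : Matrix (Fin n) (Fin m) ℝ)
    (Cz : Matrix (Fin r) (Fin n) ℝ)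
    (P : Matrix (Fin n) (Fin n) ℝ) (hP : P.PosSemidef) (γ : ℝ) (hγ : 0 < γ)
    (hLMI : ∀ (x : Fin n → ℝ) (u : Fin m → ℝ),
      x ⬝ᵥ ((Aᵀ * P + P * A + Czᵀ * Cz).mulVec x)
        + 2 * (x ⬝ᵥ ((P * B).mulVec u)) - γ * (u ⬝ᵥ u) ≤ 0)
    (x : ℝ → (Fin n → ℝ)) (u : ℝ → (Fin m → ℝ))
    (hx : ∀ t, HasDerivAt x (A.mulVec (x t) + B.mulVec (u t)) t)
    (hu : Continuous u) (hx0 : x 0 = 0) :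
    ∀ T : ℝ, 0 ≤ T →
      ∫ t in (0:ℝ)..T, ‖(EuclideanSpace.equiv (Fin r) ℝ).symm (Cz.mulVec (x t))‖ ^ 2
        ≤ γ * ∫ t in (0:ℝ)..T, ‖(EuclideanSpace.equiv (Fin m) ℝ).symm (u t)‖ ^ 2 :=
  statement7_general n m r A B Cz P hP γ hLMI x u hx hu hx0
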